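/- Let K be a field of characteristic 0, H a Hopf algebra over K, and B a unital left H-module algebra such that B = K·1_B ⊕ B⁺ as vector spaces, where B⁺ is a subalgebra of B stable under the H-action (h·B⁺ ⊆ B⁺ for all h ∈ H). In the smash product B # H with multiplication (x#h)(y#h') = Σ x(h₍₁₎·y) # h₍₂₎h', the subspaces K1_B # H ≅ H and B⁺ # H are subalgebras, B # H = (K1_B # H) ⊕ (B⁺ # H) as vector spaces, and the linear projection P₀ from B # H onto K1_B # H along B⁺ # H is an idempotent Rota–Baxter operator of weight −1, i.e. P₀ ∘ P₀ = P₀ and P₀(u)P₀(v) = P₀(uP₀(v)) + P₀(P₀(u)v) − P₀(uv) for all u, v ∈ B # H. -/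
import Mathlib


open TensorProduct

set_option synthInstance.maxHeartbeats 1000000
set_option maxHeartbeats 2000000

noncomputable section

/-- The smash-product multiplication on `B ⊗ H`:
`(x # h)(y # h') = Σ x(h₍₁₎·y) # h₍₂₎h'`, where `act : H ⊗ B → B` is the `H`-action on `B`. -/
def smashMul (K : Type*) [Field K] (H : Type*) [Ring H] [HopfAlgebra K H]
    (B : Type*) [Ring B] [Algebra K B]
    (act : H ⊗[K] B →ₗ[K] B) :
    (B ⊗[K] H) ⊗[K] (B ⊗[K] H) →ₗ[K] B ⊗[K] H :=
  TensorProduct.map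
      (LinearMap.mul' K B ∘ₗ TensorProduct.map LinearMap.id act ∘ₗ
        (TensorProduct.assoc K B H B).toLinearMap)
      (LinearMap.mul' K H) ∘ₗ
    (TensorProduct.tensorTensorTensorComm K (B ⊗[K] H) H B H).toLinearMap ∘ₗ
    TensorProduct.map
      ((TensorProduct.assoc K B H H).symm.toLinearMap ∘ₗ
        TensorProduct.map LinearMap.id (Coalgebra.comul : H →ₗ[K] H ⊗[K] H))
      LinearMap.id

section Aux
variable (K : Type*) [Field K] (H : Type*) [Ring H] [HopfAlgebra K H]
    (B : Type*) [Ring B] [Algebra K B] (act : H ⊗[K] B →ₗ[K] B) (p : B →ₗ[K] B)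

lemma smash_mem
    (x y : B) (h h' : H) (S : Submodule K (B ⊗[K] H))
    (hS : ∀ a b : H, (x * act (a ⊗ₜ[K] y)) ⊗ₜ[K] (b * h') ∈ S) :
    smashMul K H B act ((x ⊗ₜ[K] h) ⊗ₜ[K] (y ⊗ₜ[K] h')) ∈ S := by
  rw [smashMul]
  simp only [LinearMap.comp_apply, TensorProduct.map_tmul, LinearMap.id_apply,
    LinearEquiv.coe_coe]
  generalize (Coalgebra.comul (R := K) h) = t
  induction t using TensorProduct.induction_on with
  | zero => simp
  | tmul a b => simpa using hS a b
  | add t1 t2 h1 h2 =>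
    rw [tmul_add, map_add, add_tmul, map_add, map_add]
    exact S.add_mem h1 h2

abbrev RBeq (u v : B ⊗[K] H) : Prop :=
  smashMul K H B act
      (TensorProduct.map p LinearMap.id u ⊗ₜ[K] TensorProduct.map p LinearMap.id v)
    = TensorProduct.map p LinearMap.id
          (smashMul K H B act (u ⊗ₜ[K] TensorProduct.map p LinearMap.id v))
      + TensorProduct.map p LinearMap.id
          (smashMul K H B act (TensorProduct.map p LinearMap.id u ⊗ₜ[K] v))
      - TensorProduct.map p LinearMap.id (smashMul K H B act (u ⊗ₜ[K] v))

lemma rbeq_add_left {u1 u2 v : B ⊗[K] H}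
    (h1 : RBeq K H B act p u1 v) (h2 : RBeq K H B act p u2 v) :
    RBeq K H B act p (u1 + u2) v := by
  unfold RBeq at *
  simp only [map_add, add_tmul]
  rw [h1, h2]; abel

lemma rbeq_add_right {u v1 v2 : B ⊗[K] H}
    (h1 : RBeq K H B act p u v1) (h2 : RBeq K H B act p u v2) :
    RBeq K H B act p u (v1 + v2) := by
  unfold RBeq at *
  simp only [map_add, tmul_add]
  rw [h1, h2]; abel

lemma rbeq_smul_left (c : K) {u v : B ⊗[K] H}
    (h : RBeq K H B act p u v) : RBeq K H B act p (c • u) v := by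
  unfold RBeq at *
  simp only [map_smul, ← smul_tmul']
  rw [h, smul_sub, smul_add]

lemma rbeq_smul_right (c : K) {u v : B ⊗[K] H}
    (h : RBeq K H B act p u v) : RBeq K H B act p u (c • v) := by
  unfold RBeq at *
  simp only [map_smul, tmul_smul]
  rw [h, smul_sub, smul_add]

end Aux

/-- let `B` be a unital left `H`-module algebra with `B = K·1_B ⊕ B⁺`, where the
subalgebra `B⁺` is stable under the `H`-action. In the smash product `B # H` (the space
`B ⊗ H` with multiplication `smashMul`), the subspaces `K1_B # H` and `B⁺ # H` are
subalgebras, `B # H` is their direct sum, and the projection `P₀ = p ⊗ id_H` onto `K1_B # H`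
along `B⁺ # H` (where `p` is the projection of `B` onto `K·1_B` along `B⁺`) is an idempotent
Rota–Baxter operator of weight `-1`. -/
theorem smashProduct_projection_isRotaBaxter
    (K : Type*) [Field K] [CharZero K]
    (H : Type*) [Ring H] [HopfAlgebra K H]
    (B : Type*) [Ring B] [Algebra K B]
    (act : H ⊗[K] B →ₗ[K] B)
    (hact_one : ∀ x : B, act ((1 : H) ⊗ₜ[K] x) = x)
    (hact_mul : ∀ (h h' : H) (x : B),
      act ((h * h') ⊗ₜ[K] x) = act (h ⊗ₜ[K] act (h' ⊗ₜ[K] x)))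
    (hma : act ∘ₗ TensorProduct.map LinearMap.id (LinearMap.mul' K B)
        = LinearMap.mul' K B ∘ₗ TensorProduct.map act act ∘ₗ
            (TensorProduct.tensorTensorTensorComm K H H B B).toLinearMap ∘ₗ
            TensorProduct.map (Coalgebra.comul : H →ₗ[K] H ⊗[K] H) LinearMap.id)
    (hact_unit : ∀ h : H, act (h ⊗ₜ[K] (1 : B)) = (Coalgebra.counit h : K) • (1 : B))
    (Bp : Submodule K B)
    (hBp_mul : ∀ x ∈ Bp, ∀ y ∈ Bp, x * y ∈ Bp)
    (hBp_stable : ∀ h : H, ∀ x ∈ Bp, act (h ⊗ₜ[K] x) ∈ Bp)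
    (hdecomp : IsCompl (Submodule.span K {(1 : B)}) Bp)
    (p : B →ₗ[K] B)
    (hp_one : p 1 = 1)
    (hp_zero : ∀ x ∈ Bp, p x = 0)
    (hp_range : ∀ x : B, p x ∈ Submodule.span K {(1 : B)}) :
    (∀ u ∈ LinearMap.range (LinearMap.rTensor H (Submodule.span K {(1 : B)}).subtype),
      ∀ v ∈ LinearMap.range (LinearMap.rTensor H (Submodule.span K {(1 : B)}).subtype),
        smashMul K H B act (u ⊗ₜ[K] v)
          ∈ LinearMap.range (LinearMap.rTensor H (Submodule.span K {(1 : B)}).subtype)) ∧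
    (∀ u ∈ LinearMap.range (LinearMap.rTensor H Bp.subtype),
      ∀ v ∈ LinearMap.range (LinearMap.rTensor H Bp.subtype),
        smashMul K H B act (u ⊗ₜ[K] v) ∈ LinearMap.range (LinearMap.rTensor H Bp.subtype)) ∧
    IsCompl (LinearMap.range (LinearMap.rTensor H (Submodule.span K {(1 : B)}).subtype))
      (LinearMap.range (LinearMap.rTensor H Bp.subtype)) ∧
    (∀ u ∈ LinearMap.range (LinearMap.rTensor H (Submodule.span K {(1 : B)}).subtype),
      TensorProduct.map p LinearMap.id u = u) ∧
    (∀ u ∈ LinearMap.range (LinearMap.rTensor H Bp.subtype),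
      TensorProduct.map p LinearMap.id u = 0) ∧
    TensorProduct.map p LinearMap.id ∘ₗ TensorProduct.map p LinearMap.id
      = (TensorProduct.map p LinearMap.id : B ⊗[K] H →ₗ[K] B ⊗[K] H) ∧
    (∀ u v : B ⊗[K] H,
      smashMul K H B act
          (TensorProduct.map p LinearMap.id u ⊗ₜ[K] TensorProduct.map p LinearMap.id v)
        = TensorProduct.map p LinearMap.id
              (smashMul K H B act (u ⊗ₜ[K] TensorProduct.map p LinearMap.id v))
          + TensorProduct.map p LinearMap.id
              (smashMul K H B act (TensorProduct.map p LinearMap.id u ⊗ₜ[K] v))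
          - TensorProduct.map p LinearMap.id (smashMul K H B act (u ⊗ₜ[K] v))) := by
  classical
  have hp_fix : ∀ s ∈ Submodule.span K {(1 : B)}, p s = s := by
    intro s hs
    obtain ⟨c, rfl⟩ := Submodule.mem_span_singleton.mp hs
    rw [map_smul, hp_one]
  have hp_sub : ∀ x : B, x - p x ∈ Bp := by
    intro x
    have hx : x ∈ Submodule.span K {(1 : B)} ⊔ Bp := by
      rw [hdecomp.sup_eq_top]; trivial
    obtain ⟨s, hs, b, hb, rfl⟩ := Submodule.mem_sup.mp hx
    have hps : p (s + b) = s := by rw [map_add, hp_fix s hs, hp_zero b hb, add_zero]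
    rw [hps]; simpa using hb
  -- membership of simple tensors
  have hmem1 : ∀ s : B, s ∈ Submodule.span K {(1 : B)} → ∀ h : H,
      s ⊗ₜ[K] h ∈ LinearMap.range (LinearMap.rTensor H (Submodule.span K {(1 : B)}).subtype) := by
    intro s hs h
    exact ⟨(⟨s, hs⟩ : Submodule.span K {(1 : B)}) ⊗ₜ[K] h, rfl⟩
  have hmem2 : ∀ b : B, b ∈ Bp → ∀ h : H,
      b ⊗ₜ[K] h ∈ LinearMap.range (LinearMap.rTensor H Bp.subtype) := by
    intro b hb h
    exact ⟨(⟨b, hb⟩ : Bp) ⊗ₜ[K] h, rfl⟩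
  -- P fixes R1
  have hfix : ∀ u ∈ LinearMap.range (LinearMap.rTensor H (Submodule.span K {(1 : B)}).subtype),
      TensorProduct.map p LinearMap.id u = u := by
    rintro u ⟨w, rfl⟩
    induction w using TensorProduct.induction_on with
    | zero => simp
    | tmul m h => simp [hp_fix m.1 m.2]
    | add a b ha hb => simp only [map_add, ha, hb]
  -- P kills R2
  have hkill : ∀ u ∈ LinearMap.range (LinearMap.rTensor H Bp.subtype),
      TensorProduct.map p LinearMap.id u = 0 := by
    rintro u ⟨w, rfl⟩
    induction w using TensorProduct.induction_on with
    | zero => simp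
    | tmul m h => simp [hp_zero m.1 m.2]
    | add a b ha hb => simp only [map_add, ha, hb, add_zero]
  have hPmem : ∀ u : B ⊗[K] H, TensorProduct.map p LinearMap.id u
      ∈ LinearMap.range (LinearMap.rTensor H (Submodule.span K {(1 : B)}).subtype) := by
    intro u
    induction u using TensorProduct.induction_on with
    | zero => simp
    | tmul x h => simpa using hmem1 _ (hp_range x) h
    | add a b ha hb => rw [map_add]; exact Submodule.add_mem _ ha hb
  have hQmem : ∀ u : B ⊗[K] H, u - TensorProduct.map p LinearMap.id u
      ∈ LinearMap.range (LinearMap.rTensor H Bp.subtype) := by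
    intro u
    induction u using TensorProduct.induction_on with
    | zero => simp
    | tmul x h =>
      rw [TensorProduct.map_tmul, LinearMap.id_apply, ← sub_tmul]
      exact hmem2 _ (hp_sub x) h
    | add a b ha hb =>
      have : a + b - TensorProduct.map p LinearMap.id (a + b)
          = (a - TensorProduct.map p LinearMap.id a)
            + (b - TensorProduct.map p LinearMap.id b) := by
        rw [map_add]; abel
      rw [this]; exact Submodule.add_mem _ ha hb
  -- closedness of subalgebras
  have main_closed : ∀ (S : Submodule K B)
      (hm : ∀ x ∈ S, ∀ a : H, ∀ y ∈ S, x * act (a ⊗ₜ[K] y) ∈ S),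
      ∀ u ∈ LinearMap.range (LinearMap.rTensor H S.subtype),
      ∀ v ∈ LinearMap.range (LinearMap.rTensor H S.subtype),
        smashMul K H B act (u ⊗ₜ[K] v) ∈ LinearMap.range (LinearMap.rTensor H S.subtype) := by
    rintro S hm u ⟨w, rfl⟩ v ⟨w', rfl⟩
    induction w using TensorProduct.induction_on with
    | zero => simp
    | add a b ha hb =>
      rw [map_add, add_tmul, map_add]
      exact Submodule.add_mem _ ha hb
    | tmul m h =>
      induction w' using TensorProduct.induction_on with
      | zero => simp
      | add a b ha hb =>
        rw [map_add, tmul_add, map_add]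
        exact Submodule.add_mem _ ha hb
      | tmul m' h' =>
        rw [LinearMap.rTensor_tmul, LinearMap.rTensor_tmul]
        exact smash_mem K H B act m.1 m'.1 h h' _
          (fun a b => ⟨(⟨_, hm m.1 m.2 a m'.1 m'.2⟩ : S) ⊗ₜ[K] (b * h'), rfl⟩)
  have hm1 : ∀ x ∈ Submodule.span K {(1 : B)}, ∀ a : H, ∀ y ∈ Submodule.span K {(1 : B)},
      x * act (a ⊗ₜ[K] y) ∈ Submodule.span K {(1 : B)} := by
    intro x hx a y hy
    obtain ⟨c, rfl⟩ := Submodule.mem_span_singleton.mp hx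
    obtain ⟨d, rfl⟩ := Submodule.mem_span_singleton.mp hy
    have : (c • (1 : B)) * act (a ⊗ₜ[K] (d • (1 : B)))
        = (c * (d * Coalgebra.counit a)) • (1 : B) := by
      rw [tmul_smul, map_smul, hact_unit]
      simp [smul_smul, mul_comm, mul_assoc, smul_mul_assoc, mul_smul_comm]
    rw [this]
    exact Submodule.smul_mem _ _ (Submodule.mem_span_singleton_self _)
  have hm2 : ∀ x ∈ Bp, ∀ a : H, ∀ y ∈ Bp, x * act (a ⊗ₜ[K] y) ∈ Bp :=
    fun x hx a y hy => hBp_mul x hx _ (hBp_stable a y hy)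
  refine ⟨main_closed _ hm1, main_closed _ hm2, ?_, hfix, hkill, ?_, ?_⟩
  · constructor
    · rw [disjoint_iff, Submodule.eq_bot_iff]
      rintro u ⟨hu1, hu2⟩
      rw [← hfix u hu1]
      exact hkill u hu2
    · rw [codisjoint_iff, eq_top_iff]
      rintro u -
      have : u = TensorProduct.map p LinearMap.id u
          + (u - TensorProduct.map p LinearMap.id u) := by abel
      rw [this]
      exact Submodule.add_mem _ (Submodule.mem_sup_left (hPmem u))
        (Submodule.mem_sup_right (hQmem u))
  · apply TensorProduct.ext'
    intro x h
    simp [hp_fix _ (hp_range x)]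
  · -- the Rota–Baxter identity
    have key1 : ∀ h h' : H,
        TensorProduct.map p LinearMap.id
            (smashMul K H B act (((1 : B) ⊗ₜ[K] h) ⊗ₜ[K] ((1 : B) ⊗ₜ[K] h')))
          = smashMul K H B act (((1 : B) ⊗ₜ[K] h) ⊗ₜ[K] ((1 : B) ⊗ₜ[K] h')) := by
      intro h h'
      apply hfix
      apply smash_mem
      intro a b
      apply hmem1
      rw [hact_unit, one_mul]
      exact Submodule.smul_mem _ _ (Submodule.mem_span_singleton_self _)
    have key2 : ∀ x y : B, x ∈ Bp → y ∈ Bp → ∀ h h' : H,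
        TensorProduct.map p LinearMap.id
            (smashMul K H B act ((x ⊗ₜ[K] h) ⊗ₜ[K] (y ⊗ₜ[K] h'))) = 0 := by
      intro x y hx hy h h'
      apply hkill
      apply smash_mem
      intro a b
      exact hmem2 _ (hBp_mul x hx _ (hBp_stable a y hy)) _
    have core : ∀ (x y : B) (h h' : H),
        RBeq K H B act p (x ⊗ₜ[K] h) (y ⊗ₜ[K] h') := by
      intro x y h h'
      -- decompose x
      have hx : x ∈ Submodule.span K {(1 : B)} ⊔ Bp := by
        rw [hdecomp.sup_eq_top]; trivial
      obtain ⟨s, hs, bx, hbx, rfl⟩ := Submodule.mem_sup.mp hx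
      have hy : y ∈ Submodule.span K {(1 : B)} ⊔ Bp := by
        rw [hdecomp.sup_eq_top]; trivial
      obtain ⟨s', hs', by', hby', rfl⟩ := Submodule.mem_sup.mp hy
      rw [add_tmul (R := K) s bx h, add_tmul (R := K) s' by' h']
      obtain ⟨c, rfl⟩ := Submodule.mem_span_singleton.mp hs
      obtain ⟨d, rfl⟩ := Submodule.mem_span_singleton.mp hs'
      rw [← smul_tmul', ← smul_tmul']
      -- four cases
      have case11 : RBeq K H B act p ((1 : B) ⊗ₜ[K] h) ((1 : B) ⊗ₜ[K] h') := by
        unfold RBeq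
        simp only [TensorProduct.map_tmul, LinearMap.id_apply, hp_one]
        rw [key1]
        abel
      have case12 : RBeq K H B act p ((1 : B) ⊗ₜ[K] h) (by' ⊗ₜ[K] h') := by
        unfold RBeq
        simp only [TensorProduct.map_tmul, LinearMap.id_apply, hp_one, hp_zero by' hby',
          zero_tmul, tmul_zero, map_zero]
        abel
      have case21 : RBeq K H B act p (bx ⊗ₜ[K] h) ((1 : B) ⊗ₜ[K] h') := by
        unfold RBeq
        simp only [TensorProduct.map_tmul, LinearMap.id_apply, hp_one, hp_zero bx hbx,
          zero_tmul, tmul_zero, map_zero]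
        abel
      have case22 : RBeq K H B act p (bx ⊗ₜ[K] h) (by' ⊗ₜ[K] h') := by
        unfold RBeq
        simp only [TensorProduct.map_tmul, LinearMap.id_apply, hp_zero by' hby',
          hp_zero bx hbx, zero_tmul, tmul_zero, map_zero]
        rw [key2 bx by' hbx hby']
        abel
      exact rbeq_add_left K H B act p
        (rbeq_add_right K H B act p
          (rbeq_smul_right K H B act p d (rbeq_smul_left K H B act p c case11))
          (rbeq_smul_left K H B act p c case12))
        (rbeq_add_right K H B act p
          (rbeq_smul_right K H B act p d case21) case22)
    intro u v
    show RBeq K H B act p u v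
    induction u using TensorProduct.induction_on with
    | zero =>
      unfold RBeq
      simp
    | add a b ha hb => exact rbeq_add_left K H B act p ha hb
    | tmul x h =>
      induction v using TensorProduct.induction_on with
      | zero =>
        unfold RBeq
        simp
      | add a b ha hb => exact rbeq_add_right K H B act p ha hb
      | tmul y h' => exact core x y h h'
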